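/- arXiv:2405.14848 — 3 statements merged into one kernel-verified Lean document; each statement's English description precedes it below -/
import Mathlib

section
/- Let G be a finite DAG and let pa(Y) denote the set of parents of Y. If X is not a parent of Y, then every path between X and Y (in the d-separation sense) is blocked by the conditioning set pa(Y): every such path either contains a non-collider vertex in pa(Y), or contains a collider vertex not in pa(Y) having no descendant in pa(Y), provided Y has no descendants. -/
namespace Paper

variable {V : Type*}

/-- Directed edge relation of a graph on vertex type `V`. -/
abbrev Edge (V : Type*) := V → V → Prop

/-- `v` is a descendant of `u`: reachable by a directed path of length ≥ 1. -/
def Desc (E : Edge V) (u v : V) : Prop := Relation.TransGen E u v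

/-- The graph is acyclic: no directed cycles. -/
def Acyclic (E : Edge V) : Prop := ∀ v, ¬ Desc E v v

/-- `l` lists the internal vertices of a directed path from `u` to `v`. -/
def IsDirPath (E : Edge V) (u v : V) (l : List V) : Prop :=
  List.Chain' E (u :: l ++ [v]) ∧ (u :: l ++ [v]).Nodup

/-- Undirected adjacency: an edge in either direction. -/
def Adj (E : Edge V) (u v : V) : Prop := E u v ∨ E v u

/-- `l` lists the internal vertices of a path (edges in either direction) from `u` to `v`. -/
def IsPath (E : Edge V) (u v : V) (l : List V) : Prop :=
  List.Chain' (Adj E) (u :: l ++ [v]) ∧ (u :: l ++ [v]).Nodup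

/-- `w` is a collider on the path with full vertex list `p`:
both adjacent path edges point into `w`. -/
def IsColliderOn (E : Edge V) (p : List V) (w : V) : Prop :=
  ∃ a b, [a, w, b] <:+: p ∧ E a w ∧ E b w

/-- The path from `u` to `v` with internal vertices `l` is blocked by `S`. -/
def Blocked (E : Edge V) (S : Set V) (u v : V) (l : List V) : Prop :=
  (∃ w ∈ l, ¬ IsColliderOn E (u :: l ++ [v]) w ∧ w ∈ S) ∨
  (∃ w ∈ l, IsColliderOn E (u :: l ++ [v]) w ∧ w ∉ S ∧ ∀ d, Desc E w d → d ∉ S)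

/-- `u` and `v` are d-separated given `S`: every path between them is blocked. -/
def DSep (E : Edge V) (S : Set V) (u v : V) : Prop :=
  ∀ l, IsPath E u v l → Blocked E S u v l

/-- The set of parents of `y`. -/
def pa (E : Edge V) (y : V) : Set V := {u | E u y}

theorem _root_.List.Nodup.eq_of_pair_infix {α : Type*} {l : List α} {a b c : α}
    (hl : l.Nodup) (hb : [a, b] <:+: l) (hc : [a, c] <:+: l) : b = c := by
  induction l with
  | nil => simp at hb
  | cons x l ih =>
    obtain ⟨hx, hl⟩ := List.nodup_cons.mp hl
    have head_mem {d : α} (h : [a, d] <:+: l) : a ∈ l := h.subset (by simp)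
    rw [List.infix_cons_iff] at hb hc
    rcases hb with hb | hb <;> rcases hc with hc | hc
    · obtain ⟨-, hb⟩ := List.cons_prefix_cons.mp hb
      obtain ⟨-, hc⟩ := List.cons_prefix_cons.mp hc
      obtain ⟨t, rfl⟩ := hb
      simpa [eq_comm] using hc
    · exact absurd ((List.cons_prefix_cons.mp hb).1 ▸ head_mem hc) hx
    · exact absurd ((List.cons_prefix_cons.mp hc).1 ▸ head_mem hb) hx
    · exact ih hl hb hc

variable {E : Edge V} {y : V}

theorem edge_of_adj_of_not_desc (hy : ∀ v, v ≠ y → ¬ Desc E y v) {v : V} (hvy : v ≠ y)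
    (h : Adj E v y) : E v y :=
  h.resolve_right fun hyv => hy v hvy (.single hyv)

theorem not_isColliderOn_of_pair_infix {p : List V} {w : V} (hp : p.Nodup)
    (hwy : [w, y] <:+: p) (hyw : ¬ E y w) : ¬ IsColliderOn E p w := by
  rintro ⟨a, b, hawb, -, hbw⟩
  have hb : [w, b] <:+: p := (List.suffix_cons a [w, b]).isInfix.trans hawb
  exact hyw (hp.eq_of_pair_infix hwy hb ▸ hbw)

/- The vertex preceding `Y` on the path is a parent of `Y`, since `Y` has no children, so it is
not `X`; it is a non-collider because its edge to `Y` points away from it. -/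
theorem stmt2_general (E : Edge V) (X Y : V)
    (hY : ∀ v, v ≠ Y → ¬ Desc E Y v)
    (hnotpa : X ∉ pa E Y) :
    DSep E (pa E Y) X Y := by
  rintro l ⟨hchain, hnodup⟩
  rcases List.eq_nil_or_concat l with rfl | ⟨l, w, rfl⟩
  · have hXY : X ≠ Y := by simpa using hnodup
    exact absurd (edge_of_adj_of_not_desc hY hXY (List.isChain_pair.mp hchain)) hnotpa
  · have hsplit : X :: l.concat w ++ [Y] = (X :: l) ++ [w, Y] := by simp
    rw [hsplit] at hchain hnodup
    have hwY : w ≠ Y := by simpa using (List.nodup_append'.mp hnodup).2.1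
    have hwpa : w ∈ pa E Y :=
      edge_of_adj_of_not_desc hY hwY (List.isChain_pair.mp (List.isChain_append.mp hchain).2.1)
    refine .inl ⟨w, by simp, ?_, hwpa⟩
    rw [hsplit]
    exact not_isColliderOn_of_pair_infix hnodup (List.suffix_append _ _).isInfix
      fun hYw => hY w hwY (.single hYw)

theorem stmt2 [Fintype V] (E : Edge V) (hacy : Acyclic E) (X Y : V)
    (hXY : X ≠ Y) (hY : ∀ v, v ≠ Y → ¬ Desc E Y v)
    (hnotpa : X ∉ pa E Y) :
    DSep E (pa E Y) X Y :=
  stmt2_general E X Y hY hnotpa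

end Paper
end

section
/- For a finite DAG G on vertex set {X, Y} ∪ Z with Y having no descendants, the set pa(Y) \ {X} satisfies the generalized backdoor-blocking property: for every vertex M that is a parent of Y lying on a directed path from X to Y, every path between M and Y that starts with an edge into M (a backdoor path from M) is blocked by {X} ∪ (pa(Y) \ {X, M}), assuming all parents of Y are in the observed vertex set. -/
namespace Paper

variable {V : Type*}

/-
The backdoor path leaves `M` against an edge `Y → M`, and `Y` has no children, so the path has
an internal vertex; its last one, `u`, is adjacent to `Y`, hence a parent of `Y`. The edge `u → Y`
points out of `u`, so `u` is a non-collider on the path, and `u ≠ M` since paths are simple.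
Thus `u` lies in `{X} ∪ (pa Y \ {X, M})` and blocks the path.
-/

theorem _root_.List.Nodup.eq_of_infix_of_suffix {α : Type*} {p : List α} {w b v : α}
    (hp : p.Nodup) (hwb : [w, b] <:+: p) (hwv : [w, v] <:+ p) : b = v := by
  obtain ⟨s, t, rfl⟩ := hwb
  obtain ⟨r, hr⟩ := hwv
  have hnd : (r ++ w :: [v]).Nodup := hr ▸ hp
  have hw : w ∉ r ∧ w ∉ [v] := by simpa using (List.nodup_cons.mp (List.nodup_middle.mp hnd)).1
  have hsplit : r ++ w :: [v] = s ++ w :: b :: t := by simpa using hr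
  have htail : [v] = b :: t := ((List.append_cons_inj_of_notMem hw.1 hw.2).mp hsplit).2.2
  exact (List.cons.inj htail).1.symm

theorem not_isColliderOn_of_suffix {E : Edge V} {p : List V} {w v : V} (hp : p.Nodup)
    (hwv : [w, v] <:+ p) (hvw : ¬ E v w) : ¬ IsColliderOn E p w := by
  rintro ⟨a, b, habw, -, hbw⟩
  have hb : b = v := hp.eq_of_infix_of_suffix ((List.suffix_cons a _).isInfix.trans habw) hwv
  exact hvw (hb ▸ hbw)

theorem not_edge_of_forall_not_desc {E : Edge V} {Y u : V} (hY : ∀ v, v ≠ Y → ¬ Desc E Y v)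
    (huY : u ≠ Y) : ¬ E Y u :=
  fun hYu => hY u huY (.single hYu)

section

variable {E : Edge V} {u v w : V} {l : List V}

theorem last_pair_suffix : [w, v] <:+ u :: (l ++ [w]) ++ [v] :=
  ⟨u :: l, by simp⟩

theorem IsPath.ne (h : IsPath E u v l) : u ≠ v := by
  have := h.2
  simp_all

theorem IsPath.adj_last (h : IsPath E u v (l ++ [w])) : Adj E w v :=
  List.isChain_pair.mp (h.1.suffix last_pair_suffix)

theorem IsPath.last_ne_target (h : IsPath E u v (l ++ [w])) : w ≠ v := by
  simpa using h.2.sublist last_pair_suffix.sublist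

theorem IsPath.last_ne_source (h : IsPath E u v (l ++ [w])) : w ≠ u := by
  have := h.2
  simp_all [eq_comm]

end

theorem stmt8 (E : Edge V) (X Y : V)
    (hY : ∀ v, v ≠ Y → ¬ Desc E Y v)
    (M : V) :
    ∀ l : List V, IsPath E M Y l →
      E ((l ++ [Y]).head (by simp)) M →
      Blocked E ({X} ∪ (pa E Y \ {X, M})) M Y l := by
  intro l hl hback
  obtain rfl | ⟨l, u, rfl⟩ := l.eq_nil_or_concat'
  · exact (not_edge_of_forall_not_desc hY hl.ne hback).elim
  have hYu : ¬ E Y u := not_edge_of_forall_not_desc hY hl.last_ne_target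
  have huY : E u Y := hl.adj_last.resolve_right hYu
  refine .inl ⟨u, by simp, not_isColliderOn_of_suffix hl.2 last_pair_suffix hYu, ?_⟩
  by_cases huX : u = X
  · exact .inl huX
  · exact .inr ⟨huY, by simp [huX, hl.last_ne_source]⟩

end Paper
end

section
/- In a finite DAG with distinguished vertices X and Y where Y has no descendants, every path between X and Y that is not a directed path from X to Y and is not a backdoor path (first edge into X) must contain at least one collider. -/
/-! Since the path is not a backdoor path, its first edge leaves `X`. Since it is not directed,
some later edge points backwards; the first one that does meets the preceding forward edge head
to head, and their common vertex is a collider. -/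

namespace Paper

variable {V : Type*}

theorem IsColliderOn.mono {E : Edge V} {p q : List V} {w : V} (hpq : p <:+: q)
    (hw : IsColliderOn E p w) : IsColliderOn E q w :=
  let ⟨a, b, hinf, hab⟩ := hw
  ⟨a, b, hinf.trans hpq, hab⟩

theorem exists_isColliderOn_of_not_isChain (E : Edge V) (z : V) :
    ∀ (l : List V) {x y : V}, E x y → List.IsChain (Adj E) (y :: l ++ [z]) →
      ¬ List.IsChain E (x :: y :: l ++ [z]) →
      ∃ w ∈ y :: l, IsColliderOn E (x :: y :: l ++ [z]) w
  | [], x, y, hxy, hchain, hnot => by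
    rcases (List.isChain_cons_cons.mp hchain).1 with hyz | hzy
    · exact absurd (List.isChain_cons_cons.mpr ⟨hxy, List.isChain_pair.mpr hyz⟩) hnot
    · exact ⟨y, List.mem_cons_self, x, z, List.infix_refl _, hxy, hzy⟩
  | c :: l, x, y, hxy, hchain, hnot => by
    obtain ⟨hyc, hchain'⟩ := List.isChain_cons_cons.mp hchain
    by_cases hyc' : E y c
    · have hnot' : ¬ List.IsChain E (y :: c :: l ++ [z]) := fun h =>
        hnot (List.isChain_cons_cons.mpr ⟨hxy, h⟩)
      obtain ⟨w, hw, hcol⟩ := exists_isColliderOn_of_not_isChain E z l hyc' hchain' hnot'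
      exact ⟨w, List.mem_cons_of_mem _ hw, hcol.mono (List.suffix_cons x _).isInfix⟩
    · exact ⟨y, List.mem_cons_self, x, c, (List.prefix_append [x, y, c] (l ++ [z])).isInfix,
        hxy, hyc.resolve_left hyc'⟩

theorem stmt18 (E : Edge V) (X Y : V) :
    ∀ l : List V, IsPath E X Y l →
      ¬ List.Chain' E (X :: l ++ [Y]) →
      ¬ E ((l ++ [Y]).head (by simp)) X →
      ∃ w ∈ l, IsColliderOn E (X :: l ++ [Y]) w := by
  rintro (_ | ⟨y, l⟩) ⟨hchain, -⟩ hnot hback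
  · rcases (List.isChain_cons_cons.mp hchain).1 with hXY | hYX
    · exact absurd (List.isChain_pair.mpr hXY) hnot
    · exact absurd hYX hback
  · obtain ⟨hXy, hchain'⟩ := List.isChain_cons_cons.mp hchain
    exact exists_isColliderOn_of_not_isChain E Y l (hXy.resolve_right hback) hchain' hnot

end Paper
end
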